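/- arXiv:math/0401260 — 2 statements merged into one kernel-verified Lean document; each statement's English description precedes it below -/
import Mathlib

section
/- For every ℘_ω-semistable configuration K_1, …, K_m of subspaces of V⊗W with positive integer weights ω_1, …, ω_m, there exists a Jordan–Hölder filtration: a chain of subspaces 0 = V⁰ ⊊ V¹ ⊊ ⋯ ⊊ Vʰ = V such that for each l = 1, …, h the quotient configuration of {K_i} on Vˡ/Vˡ⁻¹ is ℘_ω-stable and its normalized total weighted dimension (1/(dim Vˡ − dim Vˡ⁻¹))·Σ_{i=1}^m ω_i·(dim(K_i ∩ (Vˡ⊗W)) − dim(K_i ∩ (Vˡ⁻¹⊗W))) equals ℘_ω({K_i}) = (1/dim V)·Σ_i ω_i·dim K_i. -/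
open scoped TensorProduct
open Module

noncomputable section

variable {V : Type*} [AddCommGroup V] [Module ℂ V]

/-- The image of `H ⊗ W` in `V ⊗ W` under the canonical inclusion, for `H ⊆ V`. -/
def tensorSub (W : Type*) [AddCommGroup W] [Module ℂ W] (H : Submodule ℂ V) :
    Submodule ℂ (V ⊗[ℂ] W) :=
  LinearMap.range (TensorProduct.map H.subtype (LinearMap.id : W →ₗ[ℂ] W))

variable {W : Type*} [AddCommGroup W] [Module ℂ W]

/-- `℘_ω(H) = (1/dim H)·Σ_i ω_i·dim(K_i ∩ (H⊗W))`. -/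
def slopeConfig {m : ℕ} (ω : Fin m → ℕ) (K : Fin m → Submodule ℂ (V ⊗[ℂ] W))
    (H : Submodule ℂ V) : ℚ :=
  (∑ i, (ω i : ℚ) * (finrank ℂ ↥(K i ⊓ tensorSub W H) : ℚ)) / (finrank ℂ ↥H : ℚ)

/-- `℘_ω({K_i}) = (1/dim V)·Σ_i ω_i·dim K_i`. -/
def totalConfig {m : ℕ} (ω : Fin m → ℕ) (K : Fin m → Submodule ℂ (V ⊗[ℂ] W)) : ℚ :=
  (∑ i, (ω i : ℚ) * (finrank ℂ ↥(K i) : ℚ)) / (finrank ℂ V : ℚ)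

/-- The quotient configuration of `{K_i}` on `V''/V'` (for `V' ≤ V''`): the images of
`K_i ∩ (V''⊗W)` under the canonical map `(V⊗W) → (V/V')⊗W`, viewed inside `(V/V')⊗W`. -/
def quotConfig {m : ℕ} (K : Fin m → Submodule ℂ (V ⊗[ℂ] W)) (V' V'' : Submodule ℂ V) :
    Fin m → Submodule ℂ ((V ⧸ V') ⊗[ℂ] W) :=
  fun i => Submodule.map (TensorProduct.map V'.mkQ (LinearMap.id : W →ₗ[ℂ] W))
    (K i ⊓ tensorSub W V'')

/-- `℘_ω`-semistability of the quotient configuration on `V''/V'`, tested against nonzero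
proper subspaces of `V''/V'` (realized as submodules `S` of `V/V'` with `S < V''/V'`). -/
def QuotSemistable {m : ℕ} (ω : Fin m → ℕ) (K : Fin m → Submodule ℂ (V ⊗[ℂ] W))
    (V' V'' : Submodule ℂ V) : Prop :=
  ∀ S : Submodule ℂ (V ⧸ V'), S ≠ ⊥ → S < Submodule.map V'.mkQ V'' →
    (∑ i, (ω i : ℚ) * (finrank ℂ ↥(quotConfig K V' V'' i ⊓ tensorSub W S) : ℚ)) /
        (finrank ℂ ↥S : ℚ) ≤
      (∑ i, (ω i : ℚ) * (finrank ℂ ↥(quotConfig K V' V'' i) : ℚ)) /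
        (finrank ℂ ↥(Submodule.map V'.mkQ V'') : ℚ)

/-- The slope `μ` of the subquotient `V''/V'`:
`(Σ_i ω_i·(dim(K_i ∩ (V''⊗W)) − dim(K_i ∩ (V'⊗W)))) / (dim V'' − dim V')`. -/
def hnSlope {m : ℕ} (ω : Fin m → ℕ) (K : Fin m → Submodule ℂ (V ⊗[ℂ] W))
    (V' V'' : Submodule ℂ V) : ℚ :=
  (∑ i, (ω i : ℚ) * ((finrank ℂ ↥(K i ⊓ tensorSub W V'') : ℚ) -
      (finrank ℂ ↥(K i ⊓ tensorSub W V') : ℚ))) /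
    ((finrank ℂ ↥V'' : ℚ) - (finrank ℂ ↥V' : ℚ))

/-- `℘_ω`-stability of the quotient configuration on `V''/V'`. -/
def QuotStable {m : ℕ} (ω : Fin m → ℕ) (K : Fin m → Submodule ℂ (V ⊗[ℂ] W))
    (V' V'' : Submodule ℂ V) : Prop :=
  ∀ S : Submodule ℂ (V ⧸ V'), S ≠ ⊥ → S < Submodule.map V'.mkQ V'' →
    (∑ i, (ω i : ℚ) * (finrank ℂ ↥(quotConfig K V' V'' i ⊓ tensorSub W S) : ℚ)) /
        (finrank ℂ ↥S : ℚ) <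
      (∑ i, (ω i : ℚ) * (finrank ℂ ↥(quotConfig K V' V'' i) : ℚ)) /
        (finrank ℂ ↥(Submodule.map V'.mkQ V'') : ℚ)

/-! The slope `hnSlope A B` of a subquotient `B/A` is the ratio of two quantities that are
additive along `A ≤ T ≤ B`, the weighted dimension `weightedDim` and `finrank`, so it is a
weighted mean of the slopes of `T/A` and `B/T`. Subspaces of `B/A` are the `T/A`, and the slope
of the quotient configuration at `T/A` is `hnSlope A T`; hence `B/A` is stable as soon as every
intermediate `T` has smaller slope. If `B/A` is semistable but not stable, some `T` has
`hnSlope A T = hnSlope A B`; the mean property then makes `T/A` and `B/T` semistable of the same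
slope, and induction on `dim B - dim A` splits both into stable pieces. -/

open Submodule LinearMap

lemma tensorSub_eq_range_rTensor (H : Submodule ℂ V) :
    tensorSub W H = range (H.subtype.rTensor W) := rfl

lemma tensorSub_mono : Monotone (tensorSub W : Submodule ℂ V → Submodule ℂ (V ⊗[ℂ] W)) :=
  fun H H' h => by
    simpa only [tensorSub_eq_range_rTensor, ← subtype_comp_inclusion H H' h, rTensor_comp]
      using range_comp_le_range _ _

lemma tensorSub_bot : tensorSub W (⊥ : Submodule ℂ V) = ⊥ := by
  rw [tensorSub_eq_range_rTensor, range_eq_bot]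
  ext x
  simp [Subsingleton.elim x 0]

lemma tensorSub_top : tensorSub W (⊤ : Submodule ℂ V) = ⊤ := by
  rw [tensorSub_eq_range_rTensor, range_eq_top]
  exact rTensor_surjective W fun v => ⟨⟨v, trivial⟩, rfl⟩

lemma ker_rTensor_mkQ (V' : Submodule ℂ V) : ker (V'.mkQ.rTensor W) = tensorSub W V' :=
  rTensor_mkQ W V'

lemma map_rTensor_mkQ_tensorSub (V' T : Submodule ℂ V) :
    (tensorSub W T).map (V'.mkQ.rTensor W) = tensorSub W (T.map V'.mkQ) := by
  rw [tensorSub_eq_range_rTensor, ← range_comp, ← rTensor_comp, rTensor_range,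
    range_comp, range_subtype, tensorSub_eq_range_rTensor]

lemma finrank_map_add_finrank_inf_ker {K M N : Type*} [DivisionRing K] [AddCommGroup M]
    [Module K M] [AddCommGroup N] [Module K N] [FiniteDimensional K M]
    (f : M →ₗ[K] N) (p : Submodule K M) :
    finrank K (p.map f) + finrank K ↥(p ⊓ ker f) = finrank K p := by
  rw [← range_domRestrict, ← (f.domRestrict p).finrank_range_add_finrank_ker, ker_domRestrict,
    ← finrank_map_subtype_eq, map_comap_subtype]

section Configuration

variable {m : ℕ} (ω : Fin m → ℕ) (K : Fin m → Submodule ℂ (V ⊗[ℂ] W))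

lemma quotConfig_eq_map (V' V'' : Submodule ℂ V) (i : Fin m) :
    quotConfig K V' V'' i = (K i ⊓ tensorSub W V'').map (V'.mkQ.rTensor W) := rfl

lemma quotConfig_le_tensorSub_map_mkQ (V' V'' : Submodule ℂ V) (i : Fin m) :
    quotConfig K V' V'' i ≤ tensorSub W (V''.map V'.mkQ) := by
  rw [quotConfig_eq_map, ← map_rTensor_mkQ_tensorSub]
  exact map_mono inf_le_right

lemma quotConfig_inf_tensorSub_map_mkQ {V' T V'' : Submodule ℂ V} (hV'T : V' ≤ T)
    (hTV'' : T ≤ V'') (i : Fin m) :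
    quotConfig K V' V'' i ⊓ tensorSub W (T.map V'.mkQ)
      = (K i ⊓ tensorSub W T).map (V'.mkQ.rTensor W) := by
  rw [quotConfig_eq_map, ← map_rTensor_mkQ_tensorSub, map_inf_eq_map_inf_comap, comap_map_eq,
    ker_rTensor_mkQ, sup_eq_left.2 (tensorSub_mono hV'T), inf_assoc,
    inf_eq_right.2 (tensorSub_mono hTV'')]

def weightedDim (A : Submodule ℂ V) : ℚ :=
  ∑ i, (ω i : ℚ) * (finrank ℂ ↥(K i ⊓ tensorSub W A) : ℚ)

lemma hnSlope_eq_div (A B : Submodule ℂ V) :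
    hnSlope ω K A B = (weightedDim ω K B - weightedDim ω K A) /
      ((finrank ℂ ↥B : ℚ) - finrank ℂ ↥A) := by
  simp only [hnSlope, weightedDim, mul_sub, Finset.sum_sub_distrib]

lemma weightedDim_bot : weightedDim ω K ⊥ = 0 :=
  Finset.sum_eq_zero fun i _ => by rw [tensorSub_bot, inf_bot_eq, finrank_bot]; simp

lemma weightedDim_top : weightedDim ω K ⊤ = ∑ i, (ω i : ℚ) * (finrank ℂ ↥(K i) : ℚ) :=
  Finset.sum_congr rfl fun i _ => by rw [tensorSub_top, inf_top_eq]

lemma slopeConfig_eq_hnSlope_bot (H : Submodule ℂ V) : slopeConfig ω K H = hnSlope ω K ⊥ H := by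
  rw [hnSlope_eq_div, weightedDim_bot, finrank_bot, slopeConfig, weightedDim]
  simp

lemma totalConfig_eq_hnSlope_bot_top : totalConfig ω K = hnSlope ω K ⊥ ⊤ := by
  rw [hnSlope_eq_div, weightedDim_bot, weightedDim_top, finrank_bot, finrank_top, totalConfig]
  simp

def stableStep (μ : ℚ) : SetRel (Submodule ℂ V) (Submodule ℂ V) :=
  {p | p.1 < p.2 ∧ QuotStable ω K p.1 p.2 ∧ hnSlope ω K p.1 p.2 = μ}

variable [FiniteDimensional ℂ V]

lemma finrank_sub_mul_hnSlope {A B : Submodule ℂ V} (hAB : A ≤ B) :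
    ((finrank ℂ ↥B : ℚ) - finrank ℂ ↥A) * hnSlope ω K A B
      = weightedDim ω K B - weightedDim ω K A := by
  obtain rfl | hlt := hAB.eq_or_lt
  · simp
  rw [hnSlope_eq_div, mul_div_cancel₀]
  exact sub_ne_zero.2 (by exact_mod_cast (finrank_lt_finrank_of_lt hlt).ne')

lemma finrank_sub_mul_hnSlope_sub_of_hnSlope_eq {A T B : Submodule ℂ V} {μ : ℚ}
    (hAT : A ≤ T) (hTB : T ≤ B) (hμ : hnSlope ω K A T = μ) :
    ((finrank ℂ ↥B : ℚ) - finrank ℂ ↥T) * (hnSlope ω K T B - μ)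
      = ((finrank ℂ ↥B : ℚ) - finrank ℂ ↥A) * (hnSlope ω K A B - μ) := by
  subst hμ
  linear_combination finrank_sub_mul_hnSlope ω K hTB - finrank_sub_mul_hnSlope ω K (hAT.trans hTB)
    + finrank_sub_mul_hnSlope ω K hAT

variable [FiniteDimensional ℂ W]

lemma finrank_quotConfig_inf_tensorSub_map_mkQ {V' T V'' : Submodule ℂ V} (hV'T : V' ≤ T)
    (hTV'' : T ≤ V'') (i : Fin m) :
    finrank ℂ ↥(quotConfig K V' V'' i ⊓ tensorSub W (T.map V'.mkQ))
      + finrank ℂ ↥(K i ⊓ tensorSub W V') = finrank ℂ ↥(K i ⊓ tensorSub W T) := by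
  have h := finrank_map_add_finrank_inf_ker (V'.mkQ.rTensor W) (K i ⊓ tensorSub W T)
  rwa [ker_rTensor_mkQ, inf_assoc, inf_eq_right.2 (tensorSub_mono hV'T),
    ← quotConfig_inf_tensorSub_map_mkQ K hV'T hTV''] at h

lemma slopeConfig_quotConfig_map_mkQ {V' T V'' : Submodule ℂ V} (hV'T : V' ≤ T) (hTV'' : T ≤ V'') :
    slopeConfig ω (quotConfig K V' V'') (T.map V'.mkQ) = hnSlope ω K V' T := by
  have hdim := finrank_map_add_finrank_inf_ker V'.mkQ T
  rw [ker_mkQ, inf_eq_right.2 hV'T] at hdim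
  rw [slopeConfig, hnSlope, ← hdim, Nat.cast_add, add_sub_cancel_right]
  congr 1
  refine Finset.sum_congr rfl fun i _ => ?_
  rw [← finrank_quotConfig_inf_tensorSub_map_mkQ K hV'T hTV'' i, Nat.cast_add,
    add_sub_cancel_right]

lemma quotStable_of_hnSlope_lt {V' V'' : Submodule ℂ V} (hV'V'' : V' < V'')
    (h : ∀ T, V' < T → T < V'' → hnSlope ω K V' T < hnSlope ω K V' V'') :
    QuotStable ω K V' V'' := by
  intro S hS hSV''
  obtain ⟨T, hV'T, rfl⟩ : ∃ T, V' ≤ T ∧ T.map V'.mkQ = S :=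
    ⟨S.comap V'.mkQ, le_comap_mkQ V' S, map_comap_eq_of_surjective V'.mkQ_surjective S⟩
  have hT : V' < T := by
    refine hV'T.lt_of_ne fun hV'T => hS ?_
    rw [← hV'T, mkQ_map_self]
  have hTV'' : T < V'' := by
    simpa [comap_map_mkQ, sup_eq_right.2 hV'T, sup_eq_right.2 hV'V''.le] using
      comap_strictMono_of_surjective V'.mkQ_surjective hSV''
  have hV'' : (∑ i, (ω i : ℚ) * (finrank ℂ ↥(quotConfig K V' V'' i) : ℚ)) /
      (finrank ℂ ↥(V''.map V'.mkQ) : ℚ) = hnSlope ω K V' V'' := by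
    rw [← slopeConfig_quotConfig_map_mkQ ω K hV'V''.le le_rfl, slopeConfig]
    congr 1
    exact Finset.sum_congr rfl fun i _ => by
      rw [inf_eq_left.2 (quotConfig_le_tensorSub_map_mkQ K V' V'' i)]
  rw [hV'']
  exact (slopeConfig_quotConfig_map_mkQ ω K hV'T hTV''.le).trans_lt (h T hT hTV'')

lemma exists_relSeries_stableStep {A B : Submodule ℂ V} {μ : ℚ} (hAB : A ≤ B)
    (hμ : hnSlope ω K A B = μ) (hss : ∀ T, A < T → T < B → hnSlope ω K A T ≤ μ) :
    ∃ p : RelSeries (stableStep ω K μ), p.head = A ∧ p.last = B := by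
  induction hn : finrank ℂ B - finrank ℂ A using Nat.strong_induction_on generalizing A B with
  | _ n ih =>
  obtain rfl | hAB := hAB.eq_or_lt
  · exact ⟨RelSeries.singleton _ A, rfl, rfl⟩
  by_cases hst : ∀ T, A < T → T < B → hnSlope ω K A T < μ
  · have hstep : (A, B) ∈ stableStep ω K μ :=
      ⟨hAB, quotStable_of_hnSlope_lt ω K hAB (hμ ▸ hst), hμ⟩
    exact ⟨(RelSeries.singleton _ A).snoc B hstep, rfl, RelSeries.last_snoc _ _ _⟩
  push Not at hst
  obtain ⟨T, hAT, hTB, hμT⟩ := hst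
  replace hμT : hnSlope ω K A T = μ := (hss T hAT hTB).antisymm hμT
  have hdAT : (finrank ℂ ↥A : ℚ) < finrank ℂ ↥T := by exact_mod_cast finrank_lt_finrank_of_lt hAT
  have hdTB : (finrank ℂ ↥T : ℚ) < finrank ℂ ↥B := by exact_mod_cast finrank_lt_finrank_of_lt hTB
  have hμTB : hnSlope ω K T B = μ := by
    have h := finrank_sub_mul_hnSlope_sub_of_hnSlope_eq ω K hAT.le hTB.le hμT
    rw [hμ, sub_self, mul_zero, mul_eq_zero, sub_eq_zero, sub_eq_zero] at h
    exact h.resolve_left hdTB.ne'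
  have hssTB : ∀ T', T < T' → T' < B → hnSlope ω K T T' ≤ μ := by
    intro T' hTT' hT'B
    have h := finrank_sub_mul_hnSlope_sub_of_hnSlope_eq ω K hAT.le hTT'.le hμT
    have hdTT' : (finrank ℂ ↥T : ℚ) < finrank ℂ ↥T' := by
      exact_mod_cast finrank_lt_finrank_of_lt hTT'
    nlinarith [hss T' (hAT.trans hTT') hT'B]
  have hAT' := finrank_lt_finrank_of_lt hAT
  have hTB' := finrank_lt_finrank_of_lt hTB
  obtain ⟨p, hpA, hpT⟩ := ih _ (by omega) hAT.le hμT (fun T' h₁ h₂ => hss T' h₁ (h₂.trans hTB)) rfl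
  obtain ⟨q, hqT, hqB⟩ := ih _ (by omega) hTB.le hμTB hssTB rfl
  exact ⟨p.smash q (hpT.trans hqT.symm), by simpa using hpA, by simpa using hqB⟩

end Configuration

theorem stmt_10_general (V W : Type*) [AddCommGroup V] [Module ℂ V] [FiniteDimensional ℂ V]
    [AddCommGroup W] [Module ℂ W] [FiniteDimensional ℂ W]
    (m : ℕ) (ω : Fin m → ℕ)
    (K : Fin m → Submodule ℂ (V ⊗[ℂ] W))
    (hss : ∀ H : Submodule ℂ V, H ≠ ⊥ → H ≠ ⊤ → slopeConfig ω K H ≤ totalConfig ω K) :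
    ∃ (h : ℕ) (c : Fin (h + 1) → Submodule ℂ V),
      c 0 = ⊥ ∧ c (Fin.last h) = ⊤ ∧ StrictMono c ∧
      (∀ l : Fin h, QuotStable ω K (c l.castSucc) (c l.succ)) ∧
      (∀ l : Fin h, hnSlope ω K (c l.castSucc) (c l.succ) = totalConfig ω K) := by
  obtain ⟨p, hp₀, hp₁⟩ := exists_relSeries_stableStep ω K bot_le
    (totalConfig_eq_hnSlope_bot_top ω K).symm fun T h₀ h₁ => by
      simpa [slopeConfig_eq_hnSlope_bot] using hss T h₀.ne' h₁.ne
  exact ⟨p.length, p, hp₀, hp₁, Fin.strictMono_iff_lt_succ.2 fun l => (p.step l).1,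
    fun l => (p.step l).2.1, fun l => (p.step l).2.2⟩

/-- every `℘_ω`-semistable configuration admits a Jordan–Hölder filtration. -/
theorem stmt_10 (V W : Type*) [AddCommGroup V] [Module ℂ V] [FiniteDimensional ℂ V] [Nontrivial V]
    [AddCommGroup W] [Module ℂ W] [FiniteDimensional ℂ W] [Nontrivial W]
    (m : ℕ) (hm : 1 ≤ m) (ω : Fin m → ℕ) (hω : ∀ i, 0 < ω i)
    (K : Fin m → Submodule ℂ (V ⊗[ℂ] W))
    (hss : ∀ H : Submodule ℂ V, H ≠ ⊥ → H ≠ ⊤ → slopeConfig ω K H ≤ totalConfig ω K) :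
    ∃ (h : ℕ) (c : Fin (h + 1) → Submodule ℂ V),
      c 0 = ⊥ ∧ c (Fin.last h) = ⊤ ∧ StrictMono c ∧
      (∀ l : Fin h, QuotStable ω K (c l.castSucc) (c l.succ)) ∧
      (∀ l : Fin h, hnSlope ω K (c l.castSucc) (c l.succ) = totalConfig ω K) :=
  stmt_10_general V W m ω K hss
end
end

section
/- Let ω_1, …, ω_m be positive integers with ω_i ≤ (1/2)·Σ_{j=1}^m ω_j for every i. Then there exists a configuration (V_1, …, V_m) of 2-dimensional subspaces of ℂ⁴ that is ℘_ω-semistable but not ℘_ω-stable. -/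
open Module

noncomputable section

variable {V : Type*} [AddCommGroup V] [Module ℂ V]

/-- `℘_ω(H) = (1/dim H)·Σ_i ω_i·dim(V_i ∩ H)` for a configuration of subspaces of `V`. -/
def slopeSub {m : ℕ} (ω : Fin m → ℕ) (Vc : Fin m → Submodule ℂ V) (H : Submodule ℂ V) : ℚ :=
  (∑ i, (ω i : ℚ) * (finrank ℂ ↥(Vc i ⊓ H) : ℚ)) / (finrank ℂ ↥H : ℚ)

/-- `℘_ω({V_i}) = (1/dim V)·Σ_i ω_i·dim V_i`. -/
def totalSub {m : ℕ} (ω : Fin m → ℕ) (Vc : Fin m → Submodule ℂ V) : ℚ :=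
  (∑ i, (ω i : ℚ) * (finrank ℂ ↥(Vc i) : ℚ)) / (finrank ℂ V : ℚ)

/-- The configuration `{V_i}` is `℘_ω`-semistable. -/
def SubSemistable {m : ℕ} (ω : Fin m → ℕ) (Vc : Fin m → Submodule ℂ V) : Prop :=
  ∀ H : Submodule ℂ V, H ≠ ⊥ → H ≠ ⊤ → slopeSub ω Vc H ≤ totalSub ω Vc

/-- The configuration `{V_i}` is `℘_ω`-stable. -/
def SubStable {m : ℕ} (ω : Fin m → ℕ) (Vc : Fin m → Submodule ℂ V) : Prop :=
  ∀ H : Submodule ℂ V, H ≠ ⊥ → H ≠ ⊤ → slopeSub ω Vc H < totalSub ω Vc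

/-!
The configuration is `V_i = {(x, t_i x) : x ∈ ℂ²}` for distinct `t_i ∈ ℂ`: pairwise complementary
2-planes. Since `V_i ∩ H` and `V_j ∩ H` are independent subspaces of `H`, their dimensions `d_i`
satisfy `d_i + d_j ≤ dim H` for `i ≠ j`, and a weighted averaging argument, valid when no
weight exceeds half of the total, gives `Σ ω_i d_i ≤ (Σ ω_i) dim H / 2`, i.e. semistability.
The 2-plane `H = ℂ × 0 × ℂ × 0` meets every `V_i` in a line, so it attains the bound and the
configuration is not stable.
-/

theorem two_mul_sum_mul_le_sum_mul_of_pairwise_add_le {ι R : Type*} [Fintype ι] [CommRing R]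
    [LinearOrder R] [IsStrictOrderedRing R] {w d : ι → R} {h : R} (hw : ∀ i, 0 ≤ w i)
    (hhalf : ∀ i, 2 * w i ≤ ∑ j, w j) (hd : Pairwise fun i j => d i + d j ≤ h) :
    2 * ∑ i, w i * d i ≤ (∑ i, w i) * h := by
  classical
  by_cases hbig : ∃ k, h ≤ 2 * d k
  · obtain ⟨k, hk⟩ := hbig
    have hsum := Finset.add_sum_erase Finset.univ (fun i => w i * d i) (Finset.mem_univ k)
    have htotal := Finset.add_sum_erase Finset.univ w (Finset.mem_univ k)
    have hrest : ∑ i ∈ Finset.univ.erase k, w i * d i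
        ≤ (∑ i ∈ Finset.univ.erase k, w i) * (h - d k) := by
      rw [Finset.sum_mul]
      refine Finset.sum_le_sum fun i hi => mul_le_mul_of_nonneg_left ?_ (hw i)
      linarith [hd (Finset.ne_of_mem_erase hi)]
    have hk_half : 2 * w k ≤ w k + ∑ i ∈ Finset.univ.erase k, w i := htotal ▸ hhalf k
    rw [← hsum, ← htotal]
    -- `2 (w_k d_k + (S - w_k)(h - d_k)) - S h = -(S - 2 w_k)(2 d_k - h)`
    nlinarith [mul_nonneg (sub_nonneg.2 hk_half) (sub_nonneg.2 hk)]
  · simp only [not_exists, not_le] at hbig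
    rw [Finset.mul_sum, Finset.sum_mul]
    exact Finset.sum_le_sum fun i _ => by nlinarith [hw i, hbig i]

theorem Submodule.finrank_inf_add_finrank_inf_le {K W : Type*} [DivisionRing K] [AddCommGroup W]
    [Module K W] [FiniteDimensional K W] {A B : Submodule K W} (hAB : Disjoint A B)
    (H : Submodule K W) : finrank K ↥(A ⊓ H) + finrank K ↥(B ⊓ H) ≤ finrank K H := by
  have hinf : (A ⊓ H) ⊓ (B ⊓ H) = ⊥ := (hAB.mono inf_le_left inf_le_left).eq_bot
  have hsup := Submodule.finrank_sup_add_finrank_inf_eq (A ⊓ H) (B ⊓ H)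
  rw [hinf, finrank_bot, add_zero] at hsup
  exact hsup ▸ Submodule.finrank_mono (sup_le inf_le_right inf_le_right)

section Stability

variable [FiniteDimensional ℂ V] {m : ℕ} {ω : Fin m → ℕ} {Vc : Fin m → Submodule ℂ V}

theorem subSemistable_of_pairwise_disjoint (hdisj : Pairwise fun i j => Disjoint (Vc i) (Vc j))
    (hdim : ∀ i, 2 * finrank ℂ ↥(Vc i) = finrank ℂ V)
    (hhalf : ∀ i, (ω i : ℚ) ≤ (∑ j, (ω j : ℚ)) / 2) : SubSemistable ω Vc := by
  intro H hbot _
  have hH : (0 : ℚ) < finrank ℂ H := by exact_mod_cast Submodule.one_le_finrank_iff.2 hbot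
  have hV : (0 : ℚ) < finrank ℂ V := hH.trans_le (by exact_mod_cast Submodule.finrank_le H)
  have hdimℚ : ∀ i, (finrank ℂ ↥(Vc i) : ℚ) = finrank ℂ V / 2 := fun i => by
    rw [← hdim i]; push_cast; ring
  have hkey := two_mul_sum_mul_le_sum_mul_of_pairwise_add_le (w := fun i => (ω i : ℚ))
    (d := fun i => (finrank ℂ ↥(Vc i ⊓ H) : ℚ)) (h := finrank ℂ H) (fun i => by positivity)
    (fun i => by linarith [hhalf i])
    (fun i j hij => by exact_mod_cast Submodule.finrank_inf_add_finrank_inf_le (hdisj hij) H)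
  unfold slopeSub totalSub
  simp only [hdimℚ, ← Finset.sum_mul] at hkey ⊢
  rw [div_le_div_iff₀ hH hV]
  nlinarith

theorem not_subStable_of_forall_inf_ne_bot {H : Submodule ℂ V} (hbot : H ≠ ⊥) (htop : H ≠ ⊤)
    (hdim : ∀ i, finrank ℂ H * finrank ℂ ↥(Vc i) ≤ finrank ℂ V) (hmeet : ∀ i, Vc i ⊓ H ≠ ⊥) :
    ¬ SubStable ω Vc := by
  intro hstable
  have hH : (0 : ℚ) < finrank ℂ H := by exact_mod_cast Submodule.one_le_finrank_iff.2 hbot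
  have hV : (0 : ℚ) < finrank ℂ V := hH.trans_le (by exact_mod_cast Submodule.finrank_le H)
  refine (hstable H hbot htop).not_ge ?_
  unfold slopeSub totalSub
  rw [div_le_div_iff₀ hV hH, Finset.sum_mul, Finset.sum_mul]
  refine Finset.sum_le_sum fun i _ => ?_
  have hdimℚ : (finrank ℂ H : ℚ) * finrank ℂ ↥(Vc i) ≤ finrank ℂ V := by exact_mod_cast hdim i
  have hmeetℚ : (1 : ℚ) ≤ finrank ℂ ↥(Vc i ⊓ H) := by
    exact_mod_cast Submodule.one_le_finrank_iff.2 (hmeet i)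
  have hω : (0 : ℚ) ≤ ω i := by positivity
  nlinarith [mul_le_mul_of_nonneg_left hdimℚ hω, mul_le_mul_of_nonneg_left hmeetℚ hω]

end Stability

theorem finrank_span_pair {K W : Type*} [DivisionRing K] [AddCommGroup W] [Module K W] {u v : W}
    (huv : LinearIndependent K ![u, v]) : finrank K (Submodule.span K {u, v}) = 2 := by
  rw [← Matrix.range_cons_cons_empty u v ![], finrank_span_eq_card huv, Fintype.card_fin]

def graphPlane (t : ℂ) : Submodule ℂ (Fin 4 → ℂ) :=
  Submodule.span ℂ {![1, 0, t, 0], ![0, 1, 0, t]}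

def coordPlane : Submodule ℂ (Fin 4 → ℂ) :=
  Submodule.span ℂ {![1, 0, 0, 0], ![0, 0, 1, 0]}

theorem finrank_graphPlane (t : ℂ) : finrank ℂ (graphPlane t) = 2 := by
  refine finrank_span_pair (LinearIndependent.pair_iff.2 fun a b hab => ?_)
  exact ⟨by simpa using congrFun hab 0, by simpa using congrFun hab 1⟩

theorem finrank_coordPlane : finrank ℂ coordPlane = 2 := by
  refine finrank_span_pair (LinearIndependent.pair_iff.2 fun a b hab => ?_)
  exact ⟨by simpa using congrFun hab 0, by simpa using congrFun hab 2⟩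

theorem apply_eq_of_mem_graphPlane {t : ℂ} {x : Fin 4 → ℂ} (hx : x ∈ graphPlane t) :
    x 2 = t * x 0 ∧ x 3 = t * x 1 := by
  obtain ⟨a, b, rfl⟩ := Submodule.mem_span_pair.1 hx
  simp [mul_comm]

theorem disjoint_graphPlane {s t : ℂ} (hst : s ≠ t) : Disjoint (graphPlane s) (graphPlane t) := by
  rw [Submodule.disjoint_def]
  intro x hs ht
  obtain ⟨hs2, hs3⟩ := apply_eq_of_mem_graphPlane hs
  obtain ⟨ht2, ht3⟩ := apply_eq_of_mem_graphPlane ht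
  have h0 : x 0 = 0 := by
    simpa [sub_eq_zero, hst] using (by linear_combination ht2 - hs2 : (s - t) * x 0 = 0)
  have h1 : x 1 = 0 := by
    simpa [sub_eq_zero, hst] using (by linear_combination ht3 - hs3 : (s - t) * x 1 = 0)
  funext j
  fin_cases j <;> simp [h0, h1, hs2, hs3]

theorem graphPlane_inf_coordPlane_ne_bot (t : ℂ) : graphPlane t ⊓ coordPlane ≠ ⊥ := by
  rw [Submodule.ne_bot_iff]
  refine ⟨![1, 0, t, 0], ⟨Submodule.subset_span (Set.mem_insert _ _), ?_⟩, ?_⟩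
  · refine Submodule.mem_span_pair.2 ⟨1, t, ?_⟩
    funext j
    fin_cases j <;> simp
  · intro h
    simpa using congrFun h 0

theorem stmt_19_general (m : ℕ) (ω : Fin m → ℕ)
    (hhalf : ∀ i, (ω i : ℚ) ≤ (∑ j, (ω j : ℚ)) / 2) :
    ∃ Vc : Fin m → Submodule ℂ (Fin 4 → ℂ),
      (∀ i, finrank ℂ ↥(Vc i) = 2) ∧ SubSemistable ω Vc ∧ ¬ SubStable ω Vc := by
  have hV : finrank ℂ (Fin 4 → ℂ) = 4 := finrank_fin_fun ℂ
  refine ⟨fun i => graphPlane (i : ℕ), fun i => finrank_graphPlane _, ?_, ?_⟩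
  · refine subSemistable_of_pairwise_disjoint (fun i j hij => disjoint_graphPlane ?_)
      (fun i => by rw [finrank_graphPlane, hV]) hhalf
    exact_mod_cast Fin.val_injective.ne hij
  · refine not_subStable_of_forall_inf_ne_bot (H := coordPlane) ?_ ?_
      (fun i => by rw [finrank_graphPlane, finrank_coordPlane, hV])
      (fun i => graphPlane_inf_coordPlane_ne_bot _)
    · exact Submodule.one_le_finrank_iff.1 (by rw [finrank_coordPlane]; norm_num)
    · intro htop
      have h := finrank_coordPlane
      rw [htop, finrank_top, hV] at h
      omega

/-- if each weight is at most half the total weight, there is a configuration of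
2-planes in `ℂ⁴` which is `℘_ω`-semistable but not `℘_ω`-stable. -/
theorem stmt_19 (m : ℕ) (hm : 1 ≤ m) (ω : Fin m → ℕ) (hω : ∀ i, 0 < ω i)
    (hhalf : ∀ i, (ω i : ℚ) ≤ (∑ j, (ω j : ℚ)) / 2) :
    ∃ Vc : Fin m → Submodule ℂ (Fin 4 → ℂ),
      (∀ i, finrank ℂ ↥(Vc i) = 2) ∧ SubSemistable ω Vc ∧ ¬ SubStable ω Vc :=
  stmt_19_general m ω hhalf
end
end
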